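/- arXiv:1908.05523 — 2 statements merged into one kernel-verified Lean document; each statement's English description precedes it below -/
import Mathlib

section
/- Let 0 < v < u < T. For any α ≤ 0 and β ∈ [0,1], we have |u^α - v^α| ≤ 2^{1-β} |α|^β |u - v|^β v^{α-β}. -/
/-!
Write `A = v ^ α - u ^ α ≥ 0`. Trivially `A ≤ v ^ α`, and convexity of `x ↦ x ^ α` (in the form
`t ^ α ≥ 1 + α (t - 1)`) gives `A ≤ |α| (u - v) v ^ (α - 1)`. The geometric mean
`A = A ^ (1 - β) A ^ β` of the two bounds is the claim, even without the factor `2 ^ (1 - β)`.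
-/

open Real

namespace Real

theorem one_add_mul_sub_one_le_rpow_of_nonpos {t α : ℝ} (ht : 0 < t) (hα : α ≤ 0) :
    1 + α * (t - 1) ≤ t ^ α :=
  calc 1 + α * (t - 1) ≤ 1 + α * log t := by
        gcongr 1 + ?_
        exact mul_le_mul_of_nonpos_left (log_le_sub_one_of_pos ht) hα
    _ ≤ exp (log t * α) := by linarith [add_one_le_exp (log t * α)]
    _ = t ^ α := (rpow_def_of_pos ht α).symm

theorem rpow_sub_rpow_le_of_nonpos {u v α : ℝ} (hv : 0 < v) (hvu : v ≤ u) (hα : α ≤ 0) :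
    v ^ α - u ^ α ≤ -α * (u - v) * v ^ (α - 1) := by
  have hu : 0 < u := hv.trans_le hvu
  have hsplit : u ^ α = v ^ α * (u / v) ^ α := by
    rw [div_rpow hu.le hv.le]
    field_simp
  have htangent : v ^ α * (1 + α * (u / v - 1)) = v ^ α + α * (u - v) * v ^ (α - 1) := by
    rw [rpow_sub_one hv.ne']
    field_simp
  have := mul_le_mul_of_nonneg_left (one_add_mul_sub_one_le_rpow_of_nonpos (div_pos hu hv) hα)
    (rpow_nonneg hv.le α)
  linarith

theorem le_rpow_mul_rpow_of_le_of_le {a b c β : ℝ} (ha : 0 ≤ a) (hab : a ≤ b) (hac : a ≤ c)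
    (hβ0 : 0 ≤ β) (hβ1 : β ≤ 1) : a ≤ b ^ (1 - β) * c ^ β :=
  calc a = a ^ (1 - β) * a ^ β := by rw [← rpow_add' ha (by simp), sub_add_cancel, rpow_one]
    _ ≤ b ^ (1 - β) * c ^ β :=
      mul_le_mul (rpow_le_rpow ha hab (by linarith)) (rpow_le_rpow ha hac hβ0) (rpow_nonneg ha _)
        (rpow_nonneg (ha.trans hab) _)

theorem abs_rpow_sub_rpow_le_of_nonpos {u v α β : ℝ} (hv : 0 < v) (hvu : v ≤ u) (hα : α ≤ 0)
    (hβ0 : 0 ≤ β) (hβ1 : β ≤ 1) :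
    |u ^ α - v ^ α| ≤ |α| ^ β * |u - v| ^ β * v ^ (α - β) := by
  have hmono : u ^ α ≤ v ^ α := rpow_le_rpow_of_nonpos hv hvu hα
  rw [abs_sub_comm, abs_of_nonneg (sub_nonneg.mpr hmono), abs_of_nonneg (sub_nonneg.mpr hvu),
    abs_of_nonpos hα]
  calc v ^ α - u ^ α ≤ (v ^ α) ^ (1 - β) * (-α * (u - v) * v ^ (α - 1)) ^ β :=
        le_rpow_mul_rpow_of_le_of_le (sub_nonneg.mpr hmono)
          (by linarith [rpow_nonneg (hv.trans_le hvu).le α])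
          (rpow_sub_rpow_le_of_nonpos hv hvu hα) hβ0 hβ1
    _ = (-α) ^ β * (u - v) ^ β * v ^ (α - β) := by
        have hα' : 0 ≤ -α := by linarith
        have huv : 0 ≤ u - v := by linarith
        rw [mul_rpow (by positivity) (rpow_nonneg hv.le _), mul_rpow hα' huv, ← rpow_mul hv.le,
          ← rpow_mul hv.le, mul_comm, mul_assoc, ← rpow_add hv]
        congr 2; ring

end Real

theorem rpow_diff_neg_exponent_general (u v α β : ℝ)
    (hv : 0 < v) (hvu : v < u)
    (hα : α ≤ 0) (hβ0 : 0 ≤ β) (hβ1 : β ≤ 1) :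
    |u ^ α - v ^ α| ≤ 2 ^ (1 - β) * |α| ^ β * |u - v| ^ β * v ^ (α - β) := by
  have htwo : 1 ≤ (2 : ℝ) ^ (1 - β) := one_le_rpow (by norm_num) (by linarith)
  calc |u ^ α - v ^ α| ≤ |α| ^ β * |u - v| ^ β * v ^ (α - β) :=
        abs_rpow_sub_rpow_le_of_nonpos hv hvu.le hα hβ0 hβ1
    _ ≤ 2 ^ (1 - β) * (|α| ^ β * |u - v| ^ β * v ^ (α - β)) :=
        le_mul_of_one_le_left (by positivity) htwo
    _ = 2 ^ (1 - β) * |α| ^ β * |u - v| ^ β * v ^ (α - β) := by ring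

theorem rpow_diff_neg_exponent (T u v α β : ℝ)
    (hv : 0 < v) (hvu : v < u) (huT : u < T)
    (hα : α ≤ 0) (hβ0 : 0 ≤ β) (hβ1 : β ≤ 1) :
    |u ^ α - v ^ α| ≤ 2 ^ (1 - β) * |α| ^ β * |u - v| ^ β * v ^ (α - β) :=
  rpow_diff_neg_exponent_general u v α β hv hvu hα hβ0 hβ1
end

section
/- (Fractional Gronwall with Mittag-Leffler bound) Under the hypotheses of the fractional Gronwall inequality, if additionally a is nondecreasing on [0,T), then u(t) ≤ a(t) · E_β(g(t) Γ(β) t^β) for all t ∈ [0,T), where E_β(z) = ∑_{k=0}^∞ z^k / Γ(kβ + 1) is the Mittag-Leffler function. -/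
/-!
Fix `t` and freeze the coefficients at `A = a t`, `G = g t`. By monotonicity,
`u ≤ A + G Γ(β) I^β u` on `(0, t]`, where `I^γ` is the Riemann–Liouville integral. The
semigroup law `I^γ I^β = I^(γ+β)`, a Beta integral after Tonelli, lets one iterate this:
`u t ≤ A ∑_{k ≤ n} (G Γ(β) t^β)^k / Γ(kβ + 1) + (G Γ(β))^(n+1) I^((n+1)β) u (t)`.
The remainder tends to zero because, by log-convexity, `Γ(y + β) ≥ Γ(y) (y - 1)^β`, so `Γ(kβ)`
outgrows every geometric sequence. Everything is done for `ℝ≥0∞`-valued functions (applied to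
the positive part of `u`), which removes all integrability side conditions.
-/

open MeasureTheory Set Filter Topology
open scoped ENNReal

theorem ofReal_integral_le_lintegral_ofReal {α : Type*} [MeasurableSpace α] {μ : Measure α}
    (f : α → ℝ) : ENNReal.ofReal (∫ x, f x ∂μ) ≤ ∫⁻ x, ENNReal.ofReal (f x) ∂μ := by
  by_cases hf : Integrable f μ
  · rw [integral_eq_lintegral_pos_part_sub_lintegral_neg_part hf]
    exact (ENNReal.ofReal_le_ofReal (sub_le_self _ ENNReal.toReal_nonneg)).trans
      ENNReal.ofReal_toReal_le
  · simp [integral_undef hf]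

namespace Real

theorem Gamma_mul_sub_one_rpow_le_Gamma_add {β y : ℝ} (hβ : 0 < β) (hy : 1 < y) :
    Gamma y * (y - 1) ^ β ≤ Gamma (y + β) := by
  have hy1 : 0 < y - 1 := by linarith
  have hGy1 := Gamma_pos_of_pos hy1
  -- slopes of the convex `log ∘ Gamma` on `[y - 1, y]` and `[y, y + β]`; the first is `log (y - 1)`
  have hslope := convexOn_log_Gamma.slope_mono_adjacent (x := y - 1) (y := y) (z := y + β)
    (mem_Ioi.2 hy1) (mem_Ioi.2 (by linarith)) (by linarith) (by linarith)
  have hrec : Gamma y = (y - 1) * Gamma (y - 1) := by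
    simpa using Gamma_add_one hy1.ne'
  simp only [Function.comp_apply, hrec, log_mul hy1.ne' hGy1.ne', sub_sub_cancel, div_one,
    add_sub_cancel_left] at hslope
  rw [← log_le_log_iff (by positivity) (Gamma_pos_of_pos (by linarith)), log_mul (by positivity)
    (by positivity), log_rpow hy1, hrec, log_mul hy1.ne' hGy1.ne']
  have := (le_div_iff₀ hβ).1 hslope
  linarith

end Real

theorem summable_pow_div_Gamma_mul_add {β : ℝ} (hβ : 0 < β) (x c : ℝ) :
    Summable fun k : ℕ => x ^ k / Real.Gamma (k * β + c) := by
  refine summable_of_ratio_norm_eventually_le (r := 1 / 2) (by norm_num) ?_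
  have hlin : Tendsto (fun k : ℕ => (k : ℝ) * β + c) atTop atTop :=
    tendsto_atTop_add_const_right _ c (tendsto_natCast_atTop_atTop.atTop_mul_const hβ)
  have hpow : Tendsto (fun k : ℕ => ((k : ℝ) * β + c - 1) ^ β) atTop atTop :=
    (tendsto_rpow_atTop hβ).comp (tendsto_atTop_add_const_right _ (-1) hlin |>.congr
      fun k => by ring)
  filter_upwards [hlin.eventually_gt_atTop 1, hpow.eventually_ge_atTop (2 * |x|)]
    with k hk hkpow
  have hΓ := Real.Gamma_pos_of_pos (by linarith : (0 : ℝ) < k * β + c)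
  have hgrowth : 2 * |x| * Real.Gamma (k * β + c) ≤ Real.Gamma ((k + 1 : ℕ) * β + c) := by
    calc 2 * |x| * Real.Gamma (k * β + c)
        ≤ Real.Gamma (k * β + c) * (k * β + c - 1) ^ β := by nlinarith
      _ ≤ Real.Gamma (k * β + c + β) := Real.Gamma_mul_sub_one_rpow_le_Gamma_add hβ hk
      _ = Real.Gamma ((k + 1 : ℕ) * β + c) := by push_cast; ring_nf
  have hΓ' : 0 < Real.Gamma ((k + 1 : ℕ) * β + c) := by
    refine Real.Gamma_pos_of_pos ?_
    push_cast; nlinarith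
  rw [norm_div, norm_div, norm_pow, norm_pow, Real.norm_of_nonneg hΓ.le,
    Real.norm_of_nonneg hΓ'.le, Real.norm_eq_abs, div_le_iff₀ hΓ']
  calc |x| ^ (k + 1) = 1 / 2 * (|x| ^ k / Real.Gamma (k * β + c)) *
        (2 * |x| * Real.Gamma (k * β + c)) := by field_simp; ring
    _ ≤ _ := by gcongr

noncomputable def rlKernel (γ x : ℝ) : ℝ := x ^ (γ - 1) / Real.Gamma γ

theorem rlKernel_one (x : ℝ) : rlKernel 1 x = 1 := by simp [rlKernel]

theorem rlKernel_nonneg {γ x : ℝ} (hγ : 0 ≤ γ) (hx : 0 ≤ x) : 0 ≤ rlKernel γ x :=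
  div_nonneg (Real.rpow_nonneg hx _) (Real.Gamma_nonneg_of_nonneg hγ)

@[fun_prop]
theorem measurable_rlKernel (γ : ℝ) : Measurable (rlKernel γ) := by
  unfold rlKernel; fun_prop

theorem lintegral_Ioo_rpow_mul_one_sub_rpow {p q : ℝ} (hp : 0 < p) (hq : 0 < q) :
    ∫⁻ y in Ioo 0 1, ENNReal.ofReal (y ^ (p - 1) * (1 - y) ^ (q - 1)) =
      ENNReal.ofReal (ProbabilityTheory.beta p q) := by
  have hB := ProbabilityTheory.beta_pos hp hq
  have h := ProbabilityTheory.lintegral_betaPDF_eq_one hp hq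
  simp_rw [ProbabilityTheory.lintegral_betaPDF, mul_assoc,
    ENNReal.ofReal_mul (one_div_pos.2 hB).le] at h
  rw [lintegral_const_mul' _ _ ENNReal.ofReal_ne_top, mul_comm] at h
  rw [ENNReal.eq_inv_of_mul_eq_one_left h, one_div, ENNReal.ofReal_inv_of_pos hB, inv_inv]

theorem lintegral_rlKernel_mul_rlKernel {β γ w s : ℝ} (hβ : 0 < β) (hγ : 0 < γ) (hws : w < s) :
    ∫⁻ r in Ioo w s, ENNReal.ofReal (rlKernel β (r - w)) * ENNReal.ofReal (rlKernel γ (s - r)) =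
      ENNReal.ofReal (rlKernel (β + γ) (s - w)) := by
  have hd : 0 < s - w := sub_pos.2 hws
  have himage : (fun y => (s - w) * y + w) '' Ioo 0 1 = Ioo w s := by
    rw [image_affine_Ioo hd]; simp
  rw [← himage, lintegral_image_eq_lintegral_abs_deriv_mul measurableSet_Ioo
    (fun y _ => (((hasDerivAt_id' y).const_mul (s - w)).add_const w).hasDerivWithinAt)
    (fun a _ b _ h => mul_left_cancel₀ hd.ne' (add_right_cancel h))]
  have hpoint : ∀ y ∈ Ioo (0 : ℝ) 1,
      ENNReal.ofReal |(s - w) * 1| * (ENNReal.ofReal (rlKernel β ((s - w) * y + w - w)) *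
        ENNReal.ofReal (rlKernel γ (s - ((s - w) * y + w)))) =
      ENNReal.ofReal ((s - w) ^ (β + γ - 1) / (Real.Gamma β * Real.Gamma γ)) *
        ENNReal.ofReal (y ^ (β - 1) * (1 - y) ^ (γ - 1)) := by
    rintro y ⟨hy0, hy1⟩
    have hΓβ := Real.Gamma_pos_of_pos hβ
    have hΓγ := Real.Gamma_pos_of_pos hγ
    rw [mul_one, abs_of_pos hd, add_sub_cancel_right,
      show s - ((s - w) * y + w) = (s - w) * (1 - y) by ring,
      ← ENNReal.ofReal_mul (rlKernel_nonneg hβ.le (by positivity)), ← ENNReal.ofReal_mul hd.le,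
      ← ENNReal.ofReal_mul (by positivity)]
    congr 1
    rw [rlKernel, rlKernel, Real.mul_rpow hd.le hy0.le, Real.mul_rpow hd.le (by linarith),
      show β + γ - 1 = 1 + (β - 1) + (γ - 1) by ring, Real.rpow_add hd, Real.rpow_add hd,
      Real.rpow_one]
    field_simp
  rw [setLIntegral_congr_fun measurableSet_Ioo hpoint,
    lintegral_const_mul' _ _ ENNReal.ofReal_ne_top, lintegral_Ioo_rpow_mul_one_sub_rpow hβ hγ, ← ENNReal.ofReal_mul (by positivity)]
  congr 1
  have := Real.Gamma_pos_of_pos hβ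
  have := Real.Gamma_pos_of_pos hγ
  rw [rlKernel, ProbabilityTheory.beta]
  field_simp

/-- The Riemann–Liouville integral `I^γ f (s)` of an `ℝ≥0∞`-valued `f`. -/
noncomputable def fracIntegral (γ : ℝ) (f : ℝ → ℝ≥0∞) (s : ℝ) : ℝ≥0∞ :=
  ∫⁻ r in Ioo 0 s, ENNReal.ofReal (rlKernel γ (s - r)) * f r

theorem fracIntegral_fracIntegral {β γ s : ℝ} {f : ℝ → ℝ≥0∞} (hβ : 0 < β) (hγ : 0 < γ)
    (hf : AEMeasurable f (volume.restrict (Ioo 0 s))) :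
    fracIntegral γ (fracIntegral β f) s = fracIntegral (β + γ) f s := by
  -- Tonelli on the triangle `0 < w < r < s`
  set μ := volume.restrict (Ioo 0 s)
  set F : ℝ × ℝ → ℝ≥0∞ := {p | p.2 < p.1}.indicator fun p =>
    ENNReal.ofReal (rlKernel γ (s - p.1)) * (ENNReal.ofReal (rlKernel β (p.1 - p.2)) * f p.2)
  have hF : AEMeasurable F (μ.prod μ) :=
    (by fun_prop : Measurable fun p : ℝ × ℝ => ENNReal.ofReal (rlKernel γ (s - p.1)) *
        ENNReal.ofReal (rlKernel β (p.1 - p.2))).aemeasurable.mul hf.comp_snd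
      |>.congr (ae_of_all _ fun p => mul_assoc _ _ _) |>.indicator
      (measurableSet_lt measurable_snd measurable_fst)
  have hinner : ∀ r ∈ Ioo 0 s, ENNReal.ofReal (rlKernel γ (s - r)) * fracIntegral β f r =
      ∫⁻ w, F (r, w) ∂μ := by
    rintro r ⟨hr0, hrs⟩
    have hF_r : (fun w => F (r, w)) = (Iio r).indicator fun w =>
        ENNReal.ofReal (rlKernel γ (s - r)) * (ENNReal.ofReal (rlKernel β (r - w)) * f w) := by
      ext w; simp [F, indicator_apply]
    rw [hF_r, lintegral_indicator measurableSet_Iio, Measure.restrict_restrict measurableSet_Iio,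
      Iio_inter_Ioo, min_eq_left hrs.le, fracIntegral,
      lintegral_const_mul' _ _ ENNReal.ofReal_ne_top]
  have houter : ∀ w ∈ Ioo 0 s, ∫⁻ r, F (r, w) ∂μ =
      ENNReal.ofReal (rlKernel (β + γ) (s - w)) * f w := by
    rintro w ⟨hw0, hws⟩
    have hF_w : (fun r => F (r, w)) = fun r => (Ioi w).indicator (fun r =>
        ENNReal.ofReal (rlKernel β (r - w)) * ENNReal.ofReal (rlKernel γ (s - r))) r * f w := by
      ext r; by_cases h : w < r <;> simp [F, h, mul_comm, mul_left_comm]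
    rw [hF_w, lintegral_mul_const _ ((by fun_prop : Measurable fun r =>
        ENNReal.ofReal (rlKernel β (r - w)) * ENNReal.ofReal (rlKernel γ (s - r))).indicator
        measurableSet_Ioi), lintegral_indicator measurableSet_Ioi,
      Measure.restrict_restrict measurableSet_Ioi,
      Ioi_inter_Ioo, max_eq_left hw0.le,
      lintegral_rlKernel_mul_rlKernel hβ hγ hws]
  calc fracIntegral γ (fracIntegral β f) s = ∫⁻ r, ∫⁻ w, F (r, w) ∂μ ∂μ :=
        setLIntegral_congr_fun measurableSet_Ioo hinner
    _ = ∫⁻ w, ∫⁻ r, F (r, w) ∂μ ∂μ := lintegral_lintegral_swap hF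
    _ = fracIntegral (β + γ) f s := setLIntegral_congr_fun measurableSet_Ioo houter

theorem fracIntegral_one {γ s : ℝ} (hγ : 0 < γ) (hs : 0 < s) :
    fracIntegral γ 1 s = ENNReal.ofReal (rlKernel (γ + 1) s) := by
  simpa [fracIntegral, rlKernel_one, add_comm] using
    lintegral_rlKernel_mul_rlKernel (w := 0) one_pos hγ hs

theorem fracIntegral_le_of_one_le {γ s : ℝ} (f : ℝ → ℝ≥0∞) (hγ : 1 ≤ γ) :
    fracIntegral γ f s ≤ ENNReal.ofReal (rlKernel γ s) * ∫⁻ r in Ioo 0 s, f r := by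
  rw [← lintegral_const_mul' _ _ ENNReal.ofReal_ne_top]
  refine setLIntegral_mono' measurableSet_Ioo fun r ⟨hr0, hrs⟩ => ?_
  gcongr
  exact div_le_div_of_nonneg_right (Real.rpow_le_rpow (by linarith) (by linarith) (by linarith))
    (Real.Gamma_nonneg_of_nonneg (by linarith))

theorem fracIntegral_le_of_le_add {β γ s : ℝ} {A c : ℝ≥0∞} {f : ℝ → ℝ≥0∞} (hβ : 0 < β)
    (hγ : 0 < γ) (hs : 0 < s) (hc : c ≠ ⊤) (hf : AEMeasurable f (volume.restrict (Ioo 0 s)))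
    (hle : ∀ r ∈ Ioo 0 s, f r ≤ A + c * fracIntegral β f r) :
    fracIntegral γ f s ≤
      A * ENNReal.ofReal (rlKernel (γ + 1) s) + c * fracIntegral (γ + β) f s := by
  calc fracIntegral γ f s ≤ fracIntegral γ (fun r => A + c * fracIntegral β f r) s :=
        setLIntegral_mono' measurableSet_Ioo fun r hr => by gcongr; exact hle r hr
    _ = A * fracIntegral γ 1 s + c * fracIntegral γ (fracIntegral β f) s := by
        simp only [fracIntegral, mul_add, Pi.one_apply, mul_one]
        rw [lintegral_add_left (by fun_prop), lintegral_mul_const _ (by fun_prop), mul_comm]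
        simp_rw [mul_left_comm _ c]
        rw [lintegral_const_mul' _ _ hc]
    _ = _ := by rw [fracIntegral_one hγ hs, fracIntegral_fracIntegral hβ hγ hf, add_comm β]

theorem le_sum_add_fracIntegral_of_le_add {β s : ℝ} {A c : ℝ≥0∞} {f : ℝ → ℝ≥0∞} (hβ : 0 < β)
    (hs : 0 < s) (hc : c ≠ ⊤) (hf : AEMeasurable f (volume.restrict (Ioo 0 s)))
    (hle : ∀ r ∈ Ioc 0 s, f r ≤ A + c * fracIntegral β f r) (n : ℕ) :
    f s ≤ A * ∑ k ∈ Finset.range (n + 1), c ^ k * ENNReal.ofReal (rlKernel (k * β + 1) s) +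
      c ^ (n + 1) * fracIntegral ((n + 1 : ℕ) * β) f s := by
  induction n with
  | zero => simpa [rlKernel_one] using hle s ⟨hs, le_rfl⟩
  | succ n ih =>
    have hstep := fracIntegral_le_of_le_add (γ := (n + 1 : ℕ) * β) hβ (by positivity) hs hc hf
      fun r hr => hle r (Ioo_subset_Ioc_self hr)
    rw [show ((n + 1 : ℕ) : ℝ) * β + β = (n + 1 + 1 : ℕ) * β by push_cast; ring] at hstep
    calc f s ≤ A * ∑ k ∈ Finset.range (n + 1), c ^ k * ENNReal.ofReal (rlKernel (k * β + 1) s) +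
          c ^ (n + 1) * fracIntegral ((n + 1 : ℕ) * β) f s := ih
      _ ≤ A * ∑ k ∈ Finset.range (n + 1), c ^ k * ENNReal.ofReal (rlKernel (k * β + 1) s) +
          c ^ (n + 1) * (A * ENNReal.ofReal (rlKernel ((n + 1 : ℕ) * β + 1) s) +
            c * fracIntegral ((n + 1 + 1 : ℕ) * β) f s) := by gcongr
      _ = _ := by rw [Finset.sum_range_succ _ (n + 1)]; ring

noncomputable def mittagLeffler (β z : ℝ) : ℝ := ∑' k : ℕ, z ^ k / Real.Gamma (k * β + 1)

theorem mittagLeffler_zero (β : ℝ) : mittagLeffler β 0 = 1 := by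
  rw [mittagLeffler, tsum_eq_single 0 fun k hk => by rw [zero_pow hk, zero_div]]
  simp

theorem pow_div_Gamma_nonneg {β z : ℝ} (hβ : 0 ≤ β) (hz : 0 ≤ z) (k : ℕ) :
    0 ≤ z ^ k / Real.Gamma (k * β + 1) :=
  div_nonneg (pow_nonneg hz k) (Real.Gamma_nonneg_of_nonneg (by positivity))

theorem mittagLeffler_nonneg {β z : ℝ} (hβ : 0 ≤ β) (hz : 0 ≤ z) : 0 ≤ mittagLeffler β z :=
  tsum_nonneg (pow_div_Gamma_nonneg hβ hz)

theorem ofReal_pow_mul_ofReal_rlKernel {β c s : ℝ} (hc : 0 ≤ c) (hs : 0 ≤ s) (k : ℕ) :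
    ENNReal.ofReal c ^ k * ENNReal.ofReal (rlKernel (k * β + 1) s) =
      ENNReal.ofReal ((c * s ^ β) ^ k / Real.Gamma (k * β + 1)) := by
  rw [← ENNReal.ofReal_pow hc, ← ENNReal.ofReal_mul (pow_nonneg hc k), rlKernel,
    add_sub_cancel_right, mul_comm (k : ℝ), Real.rpow_mul_natCast hs, mul_pow, mul_div_assoc]

theorem sum_ofReal_pow_mul_rlKernel_le_mittagLeffler {β c s : ℝ} (hβ : 0 < β) (hc : 0 ≤ c)
    (hs : 0 ≤ s) (n : ℕ) :
    ∑ k ∈ Finset.range n, ENNReal.ofReal c ^ k * ENNReal.ofReal (rlKernel (k * β + 1) s) ≤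
      ENNReal.ofReal (mittagLeffler β (c * s ^ β)) := by
  have hz : 0 ≤ c * s ^ β := by positivity
  simp_rw [ofReal_pow_mul_ofReal_rlKernel hc hs, mittagLeffler,
    ENNReal.ofReal_tsum_of_nonneg (pow_div_Gamma_nonneg hβ.le hz)
      (summable_pow_div_Gamma_mul_add hβ _ 1)]
  exact ENNReal.sum_le_tsum _

theorem tendsto_ofReal_pow_mul_fracIntegral_atTop {β c s : ℝ} {f : ℝ → ℝ≥0∞} (hβ : 0 < β)
    (hc : 0 ≤ c) (hs : 0 < s) (hfin : ∫⁻ r in Ioo 0 s, f r ≠ ⊤) :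
    Tendsto (fun n : ℕ => ENNReal.ofReal c ^ n * fracIntegral (n * β) f s) atTop (𝓝 0) := by
  set L := ∫⁻ r in Ioo 0 s, f r
  have hbound : ∀ᶠ n : ℕ in atTop, ENNReal.ofReal c ^ n * fracIntegral (n * β) f s ≤
      ENNReal.ofReal ((c * s ^ β) ^ n / Real.Gamma (n * β) / s) * L := by
    filter_upwards [(tendsto_natCast_atTop_atTop.atTop_mul_const hβ).eventually_ge_atTop 1]
      with n hn
    calc ENNReal.ofReal c ^ n * fracIntegral (n * β) f s
        ≤ ENNReal.ofReal c ^ n * (ENNReal.ofReal (rlKernel (n * β) s) * L) := by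
          gcongr; exact fracIntegral_le_of_one_le f hn
      _ = _ := by
          rw [← mul_assoc, ← ENNReal.ofReal_pow hc, ← ENNReal.ofReal_mul (pow_nonneg hc n),
            rlKernel, Real.rpow_sub_one hs.ne', mul_comm (n : ℝ), Real.rpow_mul_natCast hs.le,
            mul_pow]
          ring_nf
  have hlim : Tendsto (fun n : ℕ =>
      ENNReal.ofReal ((c * s ^ β) ^ n / Real.Gamma (n * β) / s) * L) atTop (𝓝 0) := by
    have h := ENNReal.tendsto_ofReal
      (((summable_pow_div_Gamma_mul_add hβ (c * s ^ β) 0).tendsto_atTop_zero).div_const s)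
    simp only [add_zero, zero_div, ENNReal.ofReal_zero] at h
    simpa using ENNReal.Tendsto.mul_const h (Or.inr hfin)
  exact tendsto_of_tendsto_of_tendsto_of_le_of_le' tendsto_const_nhds hlim
    (Eventually.of_forall fun _ => zero_le) hbound

theorem le_mul_mittagLeffler_of_le_add_fracIntegral {β c s : ℝ} {A : ℝ≥0∞} {f : ℝ → ℝ≥0∞}
    (hβ : 0 < β) (hc : 0 ≤ c) (hs : 0 < s) (hf : AEMeasurable f (volume.restrict (Ioo 0 s)))
    (hfin : ∫⁻ r in Ioo 0 s, f r ≠ ⊤)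
    (hle : ∀ r ∈ Ioc 0 s, f r ≤ A + ENNReal.ofReal c * fracIntegral β f r) :
    f s ≤ A * ENNReal.ofReal (mittagLeffler β (c * s ^ β)) := by
  have hpartial : ∀ n : ℕ, f s ≤ A * ENNReal.ofReal (mittagLeffler β (c * s ^ β)) +
      ENNReal.ofReal c ^ (n + 1) * fracIntegral ((n + 1 : ℕ) * β) f s := fun n =>
    (le_sum_add_fracIntegral_of_le_add hβ hs ENNReal.ofReal_ne_top hf hle n).trans
      (by gcongr; exact sum_ofReal_pow_mul_rlKernel_le_mittagLeffler hβ hc hs.le _)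
  have hrem := (tendsto_ofReal_pow_mul_fracIntegral_atTop hβ hc hs hfin).comp
    (tendsto_add_atTop_nat 1)
  simpa using ge_of_tendsto' (tendsto_const_nhds.add hrem) hpartial

theorem ofReal_intervalIntegral_le_fracIntegral {γ s : ℝ} (hγ : 0 < γ) (hs : 0 ≤ s) (u : ℝ → ℝ) :
    ENNReal.ofReal (∫ r in 0..s, (s - r) ^ (γ - 1) * u r) ≤
      ENNReal.ofReal (Real.Gamma γ) * fracIntegral γ (fun r => ENNReal.ofReal (u r)) s := by
  have hΓ := Real.Gamma_pos_of_pos hγ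
  have hkernel : ∀ r ∈ Ioo 0 s, ENNReal.ofReal ((s - r) ^ (γ - 1) * u r) =
      ENNReal.ofReal (Real.Gamma γ) *
        (ENNReal.ofReal (rlKernel γ (s - r)) * ENNReal.ofReal (u r)) := by
    rintro r ⟨-, hrs⟩
    rw [← ENNReal.ofReal_mul (rlKernel_nonneg hγ.le (by linarith)), ← ENNReal.ofReal_mul hΓ.le,
      rlKernel, ← mul_assoc, mul_div_cancel₀ _ hΓ.ne']
  rw [intervalIntegral.integral_of_le hs, integral_Ioc_eq_integral_Ioo, fracIntegral,
    ← lintegral_const_mul' _ _ ENNReal.ofReal_ne_top,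
    ← setLIntegral_congr_fun measurableSet_Ioo hkernel]
  exact ofReal_integral_le_lintegral_ofReal _

theorem ofReal_le_add_fracIntegral_of_le {β r a g A G : ℝ} {u : ℝ → ℝ} (hβ : 0 < β)
    (hr : 0 ≤ r) (hA : a ≤ A) (hg : 0 ≤ g) (hG : g ≤ G)
    (hu : u r ≤ a + g * ∫ w in 0..r, (r - w) ^ (β - 1) * u w) :
    ENNReal.ofReal (u r) ≤ ENNReal.ofReal A +
      ENNReal.ofReal (G * Real.Gamma β) * fracIntegral β (fun w => ENNReal.ofReal (u w)) r := by
  calc ENNReal.ofReal (u r)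
      ≤ ENNReal.ofReal a + ENNReal.ofReal g *
          ENNReal.ofReal (∫ w in 0..r, (r - w) ^ (β - 1) * u w) := by
        rw [← ENNReal.ofReal_mul hg]
        exact (ENNReal.ofReal_le_ofReal hu).trans ENNReal.ofReal_add_le
    _ ≤ _ := by
        rw [ENNReal.ofReal_mul (hg.trans hG), mul_assoc]
        gcongr
        exact ofReal_intervalIntegral_le_fracIntegral hβ hr u

open MeasureTheory in
theorem fractional_gronwall_mittag_leffler_general (T β : ℝ) (a g u : ℝ → ℝ)
    (hβ : 0 < β)
    (ha0 : ∀ t, 0 ≤ t → t < T → 0 ≤ a t)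
    (ha_mono : ∀ s t, 0 ≤ s → s ≤ t → t < T → a s ≤ a t)
    (hg0 : ∀ t, 0 ≤ t → t < T → 0 ≤ g t)
    (hg_mono : ∀ s t, 0 ≤ s → s ≤ t → t < T → g s ≤ g t)
    (hu_int : ∀ t, 0 ≤ t → t < T → IntervalIntegrable u volume 0 t)
    (hineq : ∀ t, 0 ≤ t → t < T →
      u t ≤ a t + g t * ∫ s in (0:ℝ)..t, (t - s) ^ (β - 1) * u s) :
    ∀ t, 0 ≤ t → t < T →
      u t ≤ a t * ∑' k : ℕ, (g t * Real.Gamma β * t ^ β) ^ k / Real.Gamma (k * β + 1) := by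
  intro t ht0 htT
  change u t ≤ a t * mittagLeffler β (g t * Real.Gamma β * t ^ β)
  rcases ht0.eq_or_lt with rfl | ht
  · simpa [Real.zero_rpow hβ.ne', mittagLeffler_zero] using hineq 0 le_rfl htT
  have hu_on : IntegrableOn u (Ioo 0 t) :=
    (hu_int t ht0 htT).1.mono_set Ioo_subset_Ioc_self
  have hc : 0 ≤ g t * Real.Gamma β := mul_nonneg (hg0 t ht0 htT) (Real.Gamma_pos_of_pos hβ).le
  have hbound := le_mul_mittagLeffler_of_le_add_fracIntegral hβ hc ht
    hu_on.aemeasurable.ennreal_ofReal hu_on.lintegral_lt_top.ne fun r ⟨hr0, hrt⟩ =>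
      ofReal_le_add_fracIntegral_of_le hβ hr0.le (ha_mono r t hr0.le hrt htT)
        (hg0 r hr0.le (hrt.trans_lt htT)) (hg_mono r t hr0.le hrt htT)
        (hineq r hr0.le (hrt.trans_lt htT))
  rwa [← ENNReal.ofReal_mul (ha0 t ht0 htT), ENNReal.ofReal_le_ofReal_iff
    (mul_nonneg (ha0 t ht0 htT) (mittagLeffler_nonneg hβ.le (by positivity)))] at hbound

open MeasureTheory in
theorem fractional_gronwall_mittag_leffler (T β M : ℝ) (a g u : ℝ → ℝ)
    (hT : 0 < T) (hβ : 0 < β)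
    (ha0 : ∀ t, 0 ≤ t → t < T → 0 ≤ a t)
    (ha_int : ∀ t, 0 ≤ t → t < T → IntervalIntegrable a volume 0 t)
    (ha_mono : ∀ s t, 0 ≤ s → s ≤ t → t < T → a s ≤ a t)
    (hg0 : ∀ t, 0 ≤ t → t < T → 0 ≤ g t)
    (hg_mono : ∀ s t, 0 ≤ s → s ≤ t → t < T → g s ≤ g t)
    (hg_cont : ContinuousOn g (Set.Ico 0 T))
    (hgM : ∀ t, 0 ≤ t → t < T → g t ≤ M)
    (hu0 : ∀ t, 0 ≤ t → t < T → 0 ≤ u t)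
    (hu_int : ∀ t, 0 ≤ t → t < T → IntervalIntegrable u volume 0 t)
    (hineq : ∀ t, 0 ≤ t → t < T →
      u t ≤ a t + g t * ∫ s in (0:ℝ)..t, (t - s) ^ (β - 1) * u s) :
    ∀ t, 0 ≤ t → t < T →
      u t ≤ a t * ∑' k : ℕ, (g t * Real.Gamma β * t ^ β) ^ k / Real.Gamma (k * β + 1) :=
  fractional_gronwall_mittag_leffler_general T β a g u hβ ha0 ha_mono hg0 hg_mono hu_int hineq
end
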